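/- Let G(r) = 48(15m²r² − 36mq²r + 22q⁴)(2mr − q² − r²)/r¹², the invariant ∇_μC*_{αβγδ}∇^μC*^{αβγδ} of the Reissner–Nordström black hole. If m ≠ 0, q ≠ 0 and r ≠ 0, then G(r) = 0 if and only if r² − 2mr + q² = 0; equivalently, the quadratic 15m²r² − 36mq²r + 22q⁴ is strictly positive for all real r (its discriminant equals −24m²q⁴ < 0), so G vanishes exactly at the Reissner–Nordström horizon radii r = m ± √(m² − q²) when m² ≥ q². -/
import Mathlib


/-- The invariant `∇_μ C*_{αβγδ} ∇^μ C*^{αβγδ}` of the Reissner–Nordström black hole. -/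
noncomputable def rnDualWeylGrad (m q r : ℝ) : ℝ :=
  48 * (15 * m ^ 2 * r ^ 2 - 36 * m * q ^ 2 * r + 22 * q ^ 4) *
    (2 * m * r - q ^ 2 - r ^ 2) / r ^ 12

/-- For `m ≠ 0`, `q ≠ 0`, `r ≠ 0`, the invariant `G` vanishes iff
`r² − 2mr + q² = 0`; equivalently the quadratic `15m²r² − 36mq²r + 22q⁴` is strictly
positive (its discriminant is `−24m²q⁴ < 0`), so `G` vanishes exactly at the
Reissner–Nordström horizon radii `r = m ± √(m² − q²)` when `m² ≥ q²`. -/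
theorem rnDualWeylGrad_vanishes_iff_horizon (m q : ℝ) (hm : m ≠ 0) (hq : q ≠ 0) :
    (∀ r : ℝ, r ≠ 0 → (rnDualWeylGrad m q r = 0 ↔ r ^ 2 - 2 * m * r + q ^ 2 = 0)) ∧
    (∀ r : ℝ, 0 < 15 * m ^ 2 * r ^ 2 - 36 * m * q ^ 2 * r + 22 * q ^ 4) ∧
    (36 * m * q ^ 2) ^ 2 - 4 * (15 * m ^ 2) * (22 * q ^ 4) = -24 * m ^ 2 * q ^ 4 ∧
    -24 * m ^ 2 * q ^ 4 < 0 ∧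
    (m ^ 2 ≥ q ^ 2 → ∀ r : ℝ, r ≠ 0 →
      (rnDualWeylGrad m q r = 0 ↔
        r = m + Real.sqrt (m ^ 2 - q ^ 2) ∨ r = m - Real.sqrt (m ^ 2 - q ^ 2))) := by
  have hq4 : (0:ℝ) < q ^ 4 := by positivity
  have hpos : ∀ r : ℝ, 0 < 15 * m ^ 2 * r ^ 2 - 36 * m * q ^ 2 * r + 22 * q ^ 4 := by
    intro r
    nlinarith [sq_nonneg (5 * m * r - 6 * q ^ 2), hq4]
  have hmain : ∀ r : ℝ, r ≠ 0 →
      (rnDualWeylGrad m q r = 0 ↔ r ^ 2 - 2 * m * r + q ^ 2 = 0) := by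
    intro r hr
    have hr12 : r ^ 12 ≠ 0 := pow_ne_zero _ hr
    unfold rnDualWeylGrad
    rw [div_eq_zero_iff]
    constructor
    · rintro (h | h)
      · rcases mul_eq_zero.mp h with h | h
        · rcases mul_eq_zero.mp h with h | h
          · norm_num at h
          · exact absurd h (ne_of_gt (hpos r))
        · linarith
      · exact absurd h hr12
    · intro h
      left
      have : 2 * m * r - q ^ 2 - r ^ 2 = 0 := by linarith
      rw [this]; ring
  refine ⟨hmain, hpos, by ring, by nlinarith [mul_pos (pow_pos (abs_pos.mpr hm) 2) hq4, sq_abs m], ?_⟩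
  intro hge r hr
  set s := Real.sqrt (m ^ 2 - q ^ 2) with hs
  have hs2 : s ^ 2 = m ^ 2 - q ^ 2 := Real.sq_sqrt (by linarith)
  rw [hmain r hr]
  have key : r ^ 2 - 2 * m * r + q ^ 2 = (r - (m + s)) * (r - (m - s)) := by
    linear_combination hs2
  rw [key, mul_eq_zero, sub_eq_zero, sub_eq_zero]
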